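/- Let A be an invertible n×n complex matrix and T = σI for σ ∈ ℂ. Then the (2m+1)-block tridiagonal matrix with diagonal blocks A and off-diagonal blocks -T is invertible if and only if for every eigenvalue λ of A, the scalar (2m+1)×(2m+1) tridiagonal matrix with diagonal λ and off-diagonals -σ is invertible, i.e., λ ≠ 2σ cos(jπ/(2m+2)) for all j = 1,…,2m+1. -/

import Mathlib

/-!
Write `G = I ⊗ A - J ⊗ σI`, where `J` is the adjacency matrix of the path on `N = 2m + 1`
vertices. The sine vectors `(sin (i k π / (N + 1)))ᵢ` are eigenvectors of `J` with the pairwise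
distinct eigenvalues `2 cos (k π / (N + 1))`, so the matrix `P` having them as columns is
invertible, and conjugating by `P ⊗ I` makes `G` block diagonal with blocks
`A - 2σ cos (k π / (N + 1)) I`. Hence `G` is invertible iff none of the numbers
`2σ cos (k π / (N + 1))` lies in the spectrum of `A`.
-/

open Matrix Kronecker

section Kronecker

variable {R ι κ : Type*} [CommRing R] [Fintype ι] [DecidableEq ι] [Fintype κ] [DecidableEq κ]

theorem Matrix.det_one_kronecker_sub_diagonal_kronecker (A B : Matrix κ κ R) (d : ι → R) :
    det ((1 : Matrix ι ι R) ⊗ₖ A - diagonal d ⊗ₖ B) = ∏ k, det (A - d k • B) := by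
  rw [← diagonal_one, diagonal_kronecker, diagonal_kronecker, ← coe_reindexLinearEquiv R R,
    ← map_sub, det_reindexLinearEquiv_self, ← blockDiagonal_sub, det_blockDiagonal]
  simp only [one_smul, Pi.sub_apply]

theorem Matrix.det_one_kronecker_sub_kronecker_of_mul_eq (A B : Matrix κ κ R)
    {J P : Matrix ι ι R} {d : ι → R} (hP : IsUnit P) (hJP : J * P = P * diagonal d) :
    det ((1 : Matrix ι ι R) ⊗ₖ A - J ⊗ₖ B) = ∏ k, det (A - d k • B) := by
  have hconj : (1 ⊗ₖ A - J ⊗ₖ B) * (P ⊗ₖ (1 : Matrix κ κ R))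
      = (P ⊗ₖ (1 : Matrix κ κ R)) * (1 ⊗ₖ A - diagonal d ⊗ₖ B) := by
    simp only [sub_mul, mul_sub, ← mul_kronecker_mul, Matrix.one_mul, Matrix.mul_one, hJP]
  have hunit : IsUnit (P ⊗ₖ (1 : Matrix κ κ R)).det := by
    rw [det_kronecker, det_one, one_pow, mul_one]
    exact ((isUnit_iff_isUnit_det P).mp hP).pow _
  rw [← det_one_kronecker_sub_diagonal_kronecker, ← hunit.mul_left_inj, ← det_mul, hconj,
    det_mul, mul_comm]

theorem Matrix.isUnit_det_sub_smul_one_iff_notMem_spectrum (A : Matrix κ κ R) (z : R) :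
    IsUnit (A - z • 1).det ↔ z ∉ spectrum R A := by
  rw [spectrum.mem_iff, not_not, Algebra.algebraMap_eq_smul_one, ← isUnit_iff_isUnit_det,
    ← neg_sub, IsUnit.neg_iff]

end Kronecker

theorem Matrix.isUnit_of_mul_eq_mul_diagonal {K ι : Type*} [Field K] [Fintype ι] [DecidableEq ι]
    {J P : Matrix ι ι K} {d : ι → K} (hd : Function.Injective d) (hcol : ∀ k, P.col k ≠ 0)
    (hJP : J * P = P * diagonal d) : IsUnit P := by
  rw [← linearIndependent_cols_iff_isUnit]
  refine Module.End.eigenvectors_linearIndependent' J.mulVecLin d hd P.col fun k => ⟨?_, hcol k⟩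
  rw [Module.End.mem_eigenspace_iff, mulVecLin_apply]
  funext i
  have h := congrFun (congrFun hJP i) k
  rw [mul_diagonal, mul_apply] at h
  simpa [mulVec, dotProduct, mul_comm] using h

namespace SimpleGraph

theorem map_adjMatrix {V α β : Type*} (G : SimpleGraph V) [DecidableRel G.Adj]
    [NonAssocSemiring α] [NonAssocSemiring β] (f : α →+* β) :
    (G.adjMatrix α).map f = G.adjMatrix β := by
  ext
  simp [adjMatrix_apply, apply_ite f]

instance decidableRelPathGraphAdj (N : ℕ) : DecidableRel (pathGraph N).Adj :=
  fun _ _ => decidable_of_iff' _ pathGraph_adj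

/-- The conditions `f 0 = 0` and `f (N + 1) = 0` stand in for the missing neighbours of the two
end vertices. -/
theorem pathGraph_adjMatrix_mulVec_shift {R : Type*} [NonAssocSemiring R] {N : ℕ} (f : ℕ → R)
    (h0 : f 0 = 0) (hN : f (N + 1) = 0) :
    (pathGraph N).adjMatrix R *ᵥ (fun j => f (j + 1)) = fun i : Fin N => f i + f (i + 2) := by
  funext i
  simp only [mulVec, dotProduct, adjMatrix_apply, pathGraph_adj, ite_mul, one_mul, zero_mul]
  rw [Fin.sum_univ_eq_sum_range (fun j => if (i : ℕ) + 1 = j ∨ j + 1 = i then f (j + 1) else 0)]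
  have hsplit : ∀ j : ℕ, (if (i : ℕ) + 1 = j ∨ j + 1 = i then f (j + 1) else 0)
      = (if j + 1 = i then f (j + 1) else 0) + (if (i : ℕ) + 1 = j then f (j + 1) else 0) := by
    intro j
    split_ifs <;> first | omega | simp
  simp only [hsplit, Finset.sum_add_distrib, Finset.sum_ite_eq, Finset.mem_range]
  have hprev : ∑ j ∈ Finset.range N, (if j + 1 = (i : ℕ) then f (j + 1) else 0) = f i := by
    have h := Finset.sum_range_succ' (fun t => if t = (i : ℕ) then f t else 0) N
    simp only [Finset.sum_ite_eq', Finset.mem_range, if_pos (Nat.lt_succ_of_lt i.is_lt), h0,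
      ite_self, add_zero] at h
    exact h.symm
  have hnext : (if (i : ℕ) + 1 < N then f (i + 1 + 1) else 0) = f (i + 2) := by
    split_ifs with h
    · rfl
    · rw [show (i : ℕ) + 2 = N + 1 by omega, hN]
  rw [hprev, hnext]

open Real

noncomputable def pathAngle (N : ℕ) (k : Fin N) : ℝ := (k + 1) * π / (N + 1)

noncomputable def pathSineMatrix (N : ℕ) : Matrix (Fin N) (Fin N) ℝ :=
  of fun i k => sin ((i + 1) * pathAngle N k)

theorem pathAngle_mem_Ioo {N : ℕ} (k : Fin N) : pathAngle N k ∈ Set.Ioo 0 π := by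
  have hk : (k : ℝ) + 1 < N + 1 := by exact_mod_cast Nat.succ_lt_succ k.is_lt
  constructor
  · unfold pathAngle
    positivity
  · rw [pathAngle, div_lt_iff₀ (by positivity)]
    nlinarith [pi_pos]

theorem injective_cos_pathAngle (N : ℕ) : Function.Injective fun k => cos (pathAngle N k) := by
  intro k k' h
  have hθ := injOn_cos (Set.Ioo_subset_Icc_self (pathAngle_mem_Ioo k))
    (Set.Ioo_subset_Icc_self (pathAngle_mem_Ioo k')) h
  rw [pathAngle, pathAngle, div_left_inj' (by positivity), mul_left_inj' pi_ne_zero] at hθ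
  exact Fin.ext (by exact_mod_cast add_right_cancel hθ)

theorem pathGraph_adjMatrix_mul_pathSineMatrix (N : ℕ) :
    (pathGraph N).adjMatrix ℝ * pathSineMatrix N
      = pathSineMatrix N * diagonal fun k => 2 * cos (pathAngle N k) := by
  ext i k
  set θ := pathAngle N k
  have hN : sin ((N + 1 : ℕ) * θ) = 0 := by
    rw [show ((N + 1 : ℕ) : ℝ) * θ = (k + 1 : ℕ) * π by
      simp only [θ, pathAngle]
      push_cast
      field_simp]
    exact sin_nat_mul_pi _
  have h := congrFun (pathGraph_adjMatrix_mulVec_shift (fun t : ℕ => sin (t * θ)) (by simp) hN) i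
  simp only [mulVec, dotProduct, Nat.cast_add, Nat.cast_one] at h
  rw [mul_apply, mul_diagonal]
  simp only [pathSineMatrix, of_apply]
  rw [h, sin_add_sin, show ((i : ℝ) * θ + (i + (2 : ℕ)) * θ) / 2 = (i + 1) * θ by push_cast; ring,
    show ((i : ℝ) * θ - (i + (2 : ℕ)) * θ) / 2 = -θ by push_cast; ring, cos_neg]
  ring

theorem isUnit_pathSineMatrix (N : ℕ) : IsUnit (pathSineMatrix N) := by
  refine isUnit_of_mul_eq_mul_diagonal
    ((mul_right_injective₀ two_ne_zero).comp (injective_cos_pathAngle N)) ?_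
    (pathGraph_adjMatrix_mul_pathSineMatrix N)
  intro k hk
  have h := congrFun hk ⟨0, k.pos⟩
  simp only [col_apply, pathSineMatrix, of_apply, Pi.zero_apply, Nat.cast_zero, zero_add,
    one_mul] at h
  exact (sin_pos_of_pos_of_lt_pi (pathAngle_mem_Ioo k).1 (pathAngle_mem_Ioo k).2).ne' h

theorem det_one_kronecker_sub_pathGraph_adjMatrix_kronecker {R κ : Type*} [CommRing R]
    [Algebra ℝ R] [Fintype κ] [DecidableEq κ] (N : ℕ) (A B : Matrix κ κ R) :
    det ((1 : Matrix (Fin N) (Fin N) R) ⊗ₖ A - (pathGraph N).adjMatrix R ⊗ₖ B)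
      = ∏ k, det (A - algebraMap ℝ R (2 * cos (pathAngle N k)) • B) := by
  let f := (algebraMap ℝ R).mapMatrix (m := Fin N)
  refine det_one_kronecker_sub_kronecker_of_mul_eq A B ((isUnit_pathSineMatrix N).map f) ?_
  rw [← map_adjMatrix _ (algebraMap ℝ R)]
  change f _ * f _ = f _ * _
  rw [← map_mul, pathGraph_adjMatrix_mul_pathSineMatrix, map_mul]
  simp [f, diagonal_map]

end SimpleGraph

open SimpleGraph

theorem stmt_10_general {n m : ℕ} (A : Matrix (Fin n) (Fin n) ℂ) (σ : ℂ)
    (G : Matrix (Fin (2 * m + 1) × Fin n) (Fin (2 * m + 1) × Fin n) ℂ)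
    (hG : ∀ (i j : Fin (2 * m + 1)) (a b : Fin n), G (i, a) (j, b) =
      if i = j then A a b
      else if i.val + 1 = j.val ∨ j.val + 1 = i.val then
        (if a = b then -σ else 0) else 0) :
    IsUnit G ↔ ∀ lam ∈ spectrum ℂ A, ∀ j ∈ Finset.Icc 1 (2 * m + 1),
      lam ≠ 2 * σ * Complex.cos ((j : ℂ) * (Real.pi : ℂ) / (2 * (m : ℂ) + 2)) := by
  have hG' : G = 1 ⊗ₖ A - (pathGraph (2 * m + 1)).adjMatrix ℂ ⊗ₖ (σ • 1) := by
    ext ⟨i, a⟩ ⟨j, b⟩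
    rw [hG]
    by_cases hij : i = j
    · subst hij
      simp
    · simp only [hij, ↓reduceIte, Matrix.sub_apply, kroneckerMap_apply, one_apply, zero_mul,
        adjMatrix_apply, pathGraph_adj, Matrix.smul_apply, smul_eq_mul, mul_ite, mul_one,
        mul_zero, zero_sub]
      split_ifs <;> simp
  have hval : ∀ k : Fin (2 * m + 1), algebraMap ℝ ℂ (2 * Real.cos (pathAngle _ k)) * σ
      = 2 * σ * Complex.cos (((k + 1 : ℕ) : ℂ) * Real.pi / (2 * m + 2)) := by
    intro k
    rw [Complex.coe_algebraMap, pathAngle]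
    push_cast
    ring_nf
  rw [hG', isUnit_iff_isUnit_det, det_one_kronecker_sub_pathGraph_adjMatrix_kronecker,
    IsUnit.prod_univ_iff]
  simp only [smul_smul, isUnit_det_sub_smul_one_iff_notMem_spectrum, hval]
  constructor
  · rintro h _ hlam j hj rfl
    obtain ⟨hj1, hjN⟩ := Finset.mem_Icc.mp hj
    have hk : j - 1 + 1 = j := by omega
    exact h ⟨j - 1, by omega⟩ (by rwa [hk])
  · intro h k hk
    exact h _ hk (k + 1) (Finset.mem_Icc.mpr ⟨by omega, by omega⟩) rfl

/-- The block tridiagonal Toeplitz matrix with diagonal blocks `A` and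
off-diagonal blocks `-σI` is invertible iff no eigenvalue `λ` of `A` equals
`2σ cos(jπ/(2m+2))` for some `j = 1, …, 2m+1`. -/
theorem stmt_10 {n m : ℕ} (A : Matrix (Fin n) (Fin n) ℂ) (hA : IsUnit A) (σ : ℂ)
    (G : Matrix (Fin (2 * m + 1) × Fin n) (Fin (2 * m + 1) × Fin n) ℂ)
    (hG : ∀ (i j : Fin (2 * m + 1)) (a b : Fin n), G (i, a) (j, b) =
      if i = j then A a b
      else if i.val + 1 = j.val ∨ j.val + 1 = i.val then
        (if a = b then -σ else 0) else 0) :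
    IsUnit G ↔ ∀ lam ∈ spectrum ℂ A, ∀ j ∈ Finset.Icc 1 (2 * m + 1),
      lam ≠ 2 * σ * Complex.cos ((j : ℂ) * (Real.pi : ℂ) / (2 * (m : ℂ) + 2)) :=
  stmt_10_general A σ G hG
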